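/- arXiv:1605.01782 — 2 statements merged into one kernel-verified Lean document; each statement's English description precedes it below -/
import Mathlib

section
/- Let T > 0 and let f, g, G be nonnegative functions on [0,T] with f and g absolutely continuous. Suppose that f'(t) ≤ A√(G(t)) a.e., g'(t) + G(t) ≤ α(t)g(t) + β(t)f(t)² a.e., and f(0) = 0, where α, β are nonnegative with α ∈ L¹(0,T) and t↦t·β(t) ∈ L¹(0,T). Then for all t ∈ [0,T], g(t) + ∫₀ᵗ G(s) ds ≤ g(0)·exp(∫₀ᵗ (α(s) + A²s·β(s)) ds). -/
/-!
Cauchy–Schwarz and `f 0 = 0` give `f t ^ 2 ≤ A ^ 2 * t * ∫₀ᵗ G`, so the absolutely continuous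
function `η = g + ∫₀^· G` satisfies `η' = g' + G ≤ (α + A² s β) η` a.e. Gronwall's inequality then
follows as usual: `η · exp (-∫₀^· (α + A² s β))` is absolutely continuous with a.e. nonpositive
derivative, hence nonincreasing by the fundamental theorem of calculus for absolutely continuous
functions.
-/

open MeasureTheory Set

theorem AbsolutelyContinuousOnInterval.comp_lipschitzOnWith {X Y : Type*} [PseudoMetricSpace X]
    [PseudoMetricSpace Y] {g : X → Y} {f : ℝ → X} {K : NNReal} {s : Set X} {a b : ℝ}
    (hg : LipschitzOnWith K g s)
    (hf : AbsolutelyContinuousOnInterval f a b) (hfs : MapsTo f (uIcc a b) s) :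
    AbsolutelyContinuousOnInterval (g ∘ f) a b := by
  rw [absolutelyContinuousOnInterval_iff] at hf ⊢
  intro ε hε
  obtain ⟨δ, hδ, hfδ⟩ := hf (ε / (K + 1)) (by positivity)
  refine ⟨δ, hδ, fun E hE hEδ => ?_⟩
  calc ∑ i ∈ Finset.range E.1, dist (g (f (E.2 i).1)) (g (f (E.2 i).2))
      ≤ ∑ i ∈ Finset.range E.1, K * dist (f (E.2 i).1) (f (E.2 i).2) :=
        Finset.sum_le_sum fun i hi =>
          hg.dist_le_mul _ (hfs (hE.1 i hi).1) _ (hfs (hE.1 i hi).2)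
    _ = K * ∑ i ∈ Finset.range E.1, dist (f (E.2 i).1) (f (E.2 i).2) := by
        rw [Finset.mul_sum]
    _ ≤ K * (ε / (K + 1)) := by gcongr; exact (hfδ E hE hEδ).le
    _ < ε := by
        rw [mul_div_assoc', div_lt_iff₀ (by positivity)]
        nlinarith

theorem AbsolutelyContinuousOnInterval.comp_contDiff {E : Type*} [NormedAddCommGroup E]
    [NormedSpace ℝ E] {g : ℝ → E} {f : ℝ → ℝ} {a b : ℝ}
    (hg : ContDiff ℝ 1 g) (hf : AbsolutelyContinuousOnInterval f a b) :
    AbsolutelyContinuousOnInterval (g ∘ f) a b := by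
  obtain ⟨C, hC⟩ := hf.exists_bound
  obtain ⟨K, hK⟩ := hg.contDiffOn.exists_lipschitzOnWith (s := Icc (-C) C) one_ne_zero
    (convex_Icc _ _) isCompact_Icc
  exact hf.comp_lipschitzOnWith hK fun x hx => abs_le.1 (hC x hx)

theorem AbsolutelyContinuousOnInterval.le_mul_exp_integral_of_deriv_le {u φ : ℝ → ℝ} {a b : ℝ}
    (hab : a ≤ b) (hu : AbsolutelyContinuousOnInterval u a b)
    (hφ : IntervalIntegrable φ volume a b)
    (hu' : ∀ᵐ x ∂volume.restrict (Ioo a b), deriv u x ≤ φ x * u x) :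
    u b ≤ u a * Real.exp (∫ x in a..b, φ x) := by
  set Φ : ℝ → ℝ := fun x => ∫ y in a..x, φ y
  have hE : AbsolutelyContinuousOnInterval ((Real.exp ∘ Neg.neg) ∘ Φ) a b :=
    (hφ.absolutelyContinuousOnInterval_intervalIntegral left_mem_uIcc).comp_contDiff
      (Real.contDiff_exp.comp contDiff_neg)
  have hW : AbsolutelyContinuousOnInterval (fun x => u x * Real.exp (-Φ x)) a b := hu.fun_mul hE
  have hW' : ∀ᵐ x ∂volume.restrict (Icc a b), deriv (fun x => u x * Real.exp (-Φ x)) x ≤ 0 := by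
    rw [← Measure.restrict_congr_set Ioo_ae_eq_Icc, ae_restrict_iff' measurableSet_Ioo]
    filter_upwards [hu.ae_differentiableAt, hφ.ae_hasDerivAt_integral,
      (ae_restrict_iff' measurableSet_Ioo).1 hu'] with x hdu hdΦ hx hxI
    have hxI' : x ∈ uIcc a b := by rw [uIcc_of_le hab]; exact Ioo_subset_Icc_self hxI
    have hdW : HasDerivAt (fun x => u x * Real.exp (-Φ x))
        (deriv u x * Real.exp (-Φ x) + u x * (Real.exp (-Φ x) * -φ x)) x :=
      (hdu hxI').hasDerivAt.mul (hdΦ hxI' a left_mem_uIcc).neg.exp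
    rw [hdW.deriv]
    have := Real.exp_pos (-Φ x)
    nlinarith [hx hxI]
  have hWb : u b * Real.exp (-Φ b) ≤ u a := by
    have := intervalIntegral.integral_mono_ae_restrict hab hW.intervalIntegrable_deriv
      intervalIntegrable_const hW'
    simpa [hW.integral_deriv_eq_sub, Φ] using this
  calc u b = u b * Real.exp (-Φ b) * Real.exp (Φ b) := by rw [mul_assoc, ← Real.exp_add]; simp
    _ ≤ u a * Real.exp (Φ b) := by gcongr

theorem IntervalIntegrable.add_integral_le_mul_exp_integral {ψ φ : ℝ → ℝ} {a b c : ℝ}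
    (hab : a ≤ b) (hψ : IntervalIntegrable ψ volume a b) (hφ : IntervalIntegrable φ volume a b)
    (h : ∀ᵐ x ∂volume.restrict (Ioo a b), ψ x ≤ φ x * (c + ∫ y in a..x, ψ y)) :
    c + ∫ x in a..b, ψ x ≤ c * Real.exp (∫ x in a..b, φ x) := by
  have hu : AbsolutelyContinuousOnInterval (fun x => c + ∫ y in a..x, ψ y) a b :=
    (hψ.absolutelyContinuousOnInterval_intervalIntegral left_mem_uIcc).comp_contDiff
      (contDiff_const.add contDiff_id)
  refine (hu.le_mul_exp_integral_of_deriv_le hab hφ ?_).trans_eq (by simp)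
  filter_upwards [h, ae_restrict_mem measurableSet_Ioo,
    ae_restrict_of_ae hψ.ae_hasDerivAt_integral] with x hx hxI hd
  have hxI' : x ∈ uIcc a b := by rw [uIcc_of_le hab]; exact Ioo_subset_Icc_self hxI
  rwa [((hd hxI' a left_mem_uIcc).const_add c).deriv]

section

variable {α : Type*} [MeasurableSpace α] {μ : Measure α} {G : α → ℝ}

theorem memLp_two_sqrt (hG : Integrable G μ) (hG0 : 0 ≤ᵐ[μ] G) :
    MemLp (fun x => √(G x)) 2 μ := by
  rw [memLp_two_iff_integrable_sq
    (Real.continuous_sqrt.comp_aestronglyMeasurable hG.aestronglyMeasurable)]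
  refine hG.congr ?_
  filter_upwards [hG0] with x hx
  rw [Real.sq_sqrt hx]

theorem sq_integral_sqrt_le_measureReal_mul_integral [IsFiniteMeasure μ]
    (hG : Integrable G μ) (hG0 : 0 ≤ᵐ[μ] G) :
    (∫ x, √(G x) ∂μ) ^ 2 ≤ μ.real univ * ∫ x, G x ∂μ := by
  have hsq : ∀ᵐ x ∂μ, √(G x) ^ (2 : ℝ) = G x := by
    filter_upwards [hG0] with x hx
    rw [Real.rpow_two, Real.sq_sqrt hx]
  have hHolder := integral_mul_le_Lp_mul_Lq_of_nonneg Real.HolderConjugate.two_two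
    (ae_of_all μ fun x => Real.sqrt_nonneg (G x)) (ae_of_all μ fun _ => zero_le_one)
    (by simpa using memLp_two_sqrt hG hG0) (memLp_const 1)
  simp only [mul_one, Real.one_rpow, integral_const, smul_eq_mul, integral_congr_ae hsq,
    ← Real.sqrt_eq_rpow] at hHolder
  calc (∫ x, √(G x) ∂μ) ^ 2 ≤ (√(∫ x, G x ∂μ) * √(μ.real univ)) ^ 2 := by gcongr
    _ = μ.real univ * ∫ x, G x ∂μ := by
        rw [mul_pow, Real.sq_sqrt (integral_nonneg_of_ae hG0),
          Real.sq_sqrt measureReal_nonneg, mul_comm]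

end

theorem sq_integral_le_mul_integral_of_le_mul_sqrt {f' G : ℝ → ℝ} {A a b : ℝ} (hab : a ≤ b)
    (hf' : IntervalIntegrable f' volume a b) (hG : IntervalIntegrable G volume a b)
    (hG0 : ∀ᵐ x ∂volume.restrict (Ioo a b), 0 ≤ G x)
    (h : ∀ᵐ x ∂volume.restrict (Ioo a b), f' x ≤ A * √(G x))
    (hpos : 0 ≤ ∫ x in a..b, f' x) :
    (∫ x in a..b, f' x) ^ 2 ≤ A ^ 2 * (b - a) * ∫ x in a..b, G x := by
  rw [Measure.restrict_congr_set Ioo_ae_eq_Ioc] at hG0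
  rw [Measure.restrict_congr_set Ioo_ae_eq_Icc] at h
  have hsqrt : IntervalIntegrable (fun x => √(G x)) volume a b :=
    (intervalIntegrable_iff_integrableOn_Ioc_of_le hab).2
      ((memLp_two_sqrt hG.1 hG0).integrable one_le_two)
  have hCS := sq_integral_sqrt_le_measureReal_mul_integral hG.1 hG0
  rw [measureReal_restrict_apply_univ, Real.volume_real_Ioc_of_le hab,
    ← intervalIntegral.integral_of_le hab, ← intervalIntegral.integral_of_le hab] at hCS
  calc (∫ x in a..b, f' x) ^ 2 ≤ (∫ x in a..b, A * √(G x)) ^ 2 := by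
        gcongr
        exact intervalIntegral.integral_mono_ae_restrict hab hf' (hsqrt.const_mul A) h
    _ = A ^ 2 * (∫ x in a..b, √(G x)) ^ 2 := by
        rw [intervalIntegral.integral_const_mul, mul_pow]
    _ ≤ A ^ 2 * (b - a) * ∫ x in a..b, G x := by
        rw [mul_assoc]; gcongr

theorem MeasureTheory.IntegrableOn.intervalIntegrable_of_mem_Icc {E : Type*}
    [NormedAddCommGroup E] {F : ℝ → E} {a b c : ℝ}
    (hF : IntegrableOn F (Icc a b)) (hc : c ∈ Icc a b) : IntervalIntegrable F volume a c :=
  (hF.mono_set (by rw [uIcc_of_le hc.1]; exact Icc_subset_Icc le_rfl hc.2)).intervalIntegrable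

theorem gronwall_type_g_general (T A : ℝ)
    (f g G α β f' g' : ℝ → ℝ)
    (hf_nonneg : ∀ t ∈ Icc (0:ℝ) T, 0 ≤ f t)
    (hg_nonneg : ∀ t ∈ Icc (0:ℝ) T, 0 ≤ g t)
    (hG_nonneg : ∀ t ∈ Icc (0:ℝ) T, 0 ≤ G t)
    (hα_nonneg : ∀ t ∈ Icc (0:ℝ) T, 0 ≤ α t)
    (hβ_nonneg : ∀ t ∈ Icc (0:ℝ) T, 0 ≤ β t)
    (hf'_int : IntegrableOn f' (Icc 0 T))
    (hg'_int : IntegrableOn g' (Icc 0 T))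
    (hG_int : IntegrableOn G (Icc 0 T))
    (hα_int : IntegrableOn α (Icc 0 T))
    (hβ_int : IntegrableOn (fun t => t * β t) (Icc 0 T))
    (hf_ftc : ∀ t ∈ Icc (0:ℝ) T, f t = f 0 + ∫ s in (0:ℝ)..t, f' s)
    (hg_ftc : ∀ t ∈ Icc (0:ℝ) T, g t = g 0 + ∫ s in (0:ℝ)..t, g' s)
    (hf0 : f 0 = 0)
    (h1 : ∀ᵐ t ∂(volume.restrict (Ioo 0 T)), f' t ≤ A * Real.sqrt (G t))
    (h2 : ∀ᵐ t ∂(volume.restrict (Ioo 0 T)),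
      g' t + G t ≤ α t * g t + β t * (f t) ^ 2) :
    ∀ t ∈ Icc (0:ℝ) T,
      g t + ∫ s in (0:ℝ)..t, G s ≤
        g 0 * Real.exp (∫ s in (0:ℝ)..t, (α s + A ^ 2 * s * β s)) := by
  have hη : ∀ x ∈ Icc (0:ℝ) T,
      g 0 + ∫ s in (0:ℝ)..x, (g' s + G s) = g x + ∫ s in (0:ℝ)..x, G s := fun x hx => by
      rw [intervalIntegral.integral_add (hg'_int.intervalIntegrable_of_mem_Icc hx)
        (hG_int.intervalIntegrable_of_mem_Icc hx), hg_ftc x hx, add_assoc]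
  have hIG : ∀ x ∈ Icc (0:ℝ) T, 0 ≤ ∫ s in (0:ℝ)..x, G s := fun x hx =>
    intervalIntegral.integral_nonneg hx.1 fun y hy => hG_nonneg y ⟨hy.1, hy.2.trans hx.2⟩
  have hf_sq : ∀ x ∈ Icc (0:ℝ) T, f x ^ 2 ≤ A ^ 2 * x * ∫ s in (0:ℝ)..x, G s := by
    intro x hx
    have hfx : f x = ∫ s in (0:ℝ)..x, f' s := by rw [hf_ftc x hx, hf0, zero_add]
    simpa only [← hfx, sub_zero] using sq_integral_le_mul_integral_of_le_mul_sqrt hx.1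
      (hf'_int.intervalIntegrable_of_mem_Icc hx) (hG_int.intervalIntegrable_of_mem_Icc hx)
      (ae_restrict_of_forall_mem measurableSet_Ioo fun y hy =>
        hG_nonneg y ⟨hy.1.le, hy.2.le.trans hx.2⟩)
      (ae_restrict_of_ae_restrict_of_subset (Ioo_subset_Ioo_right hx.2) h1)
      (hfx ▸ hf_nonneg x hx)
  intro t ht
  rw [← hη t ht]
  refine (hg'_int.add hG_int).intervalIntegrable_of_mem_Icc ht |>.add_integral_le_mul_exp_integral
    ht.1 ?_ ?_
  · simpa only [mul_assoc] using
      (hα_int.fun_add (hβ_int.const_mul (A ^ 2))).intervalIntegrable_of_mem_Icc ht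
  · filter_upwards [ae_restrict_of_ae_restrict_of_subset (Ioo_subset_Ioo_right ht.2) h2,
      ae_restrict_mem measurableSet_Ioo] with x hx hxt
    have hxT : x ∈ Icc (0:ℝ) T := ⟨hxt.1.le, hxt.2.le.trans ht.2⟩
    rw [hη x hxT]
    linarith [mul_le_mul_of_nonneg_left (hf_sq x hxT) (hβ_nonneg x hxT),
      mul_nonneg (hα_nonneg x hxT) (hIG x hxT),
      mul_nonneg (mul_nonneg (mul_nonneg (sq_nonneg A) hxT.1) (hβ_nonneg x hxT)) (hg_nonneg x hxT)]

/-- Lemma 2.5 (Gronwall-type inequality), estimate for `g`. -/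
theorem gronwall_type_g (T A : ℝ) (hT : 0 < T) (hA : 0 ≤ A)
    (f g G α β f' g' : ℝ → ℝ)
    (hf_nonneg : ∀ t ∈ Icc (0:ℝ) T, 0 ≤ f t)
    (hg_nonneg : ∀ t ∈ Icc (0:ℝ) T, 0 ≤ g t)
    (hG_nonneg : ∀ t ∈ Icc (0:ℝ) T, 0 ≤ G t)
    (hα_nonneg : ∀ t ∈ Icc (0:ℝ) T, 0 ≤ α t)
    (hβ_nonneg : ∀ t ∈ Icc (0:ℝ) T, 0 ≤ β t)
    (hf'_int : IntegrableOn f' (Icc 0 T))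
    (hg'_int : IntegrableOn g' (Icc 0 T))
    (hG_int : IntegrableOn G (Icc 0 T))
    (hα_int : IntegrableOn α (Icc 0 T))
    (hβ_int : IntegrableOn (fun t => t * β t) (Icc 0 T))
    (hf_ftc : ∀ t ∈ Icc (0:ℝ) T, f t = f 0 + ∫ s in (0:ℝ)..t, f' s)
    (hg_ftc : ∀ t ∈ Icc (0:ℝ) T, g t = g 0 + ∫ s in (0:ℝ)..t, g' s)
    (hf0 : f 0 = 0)
    (h1 : ∀ᵐ t ∂(volume.restrict (Ioo 0 T)), f' t ≤ A * Real.sqrt (G t))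
    (h2 : ∀ᵐ t ∂(volume.restrict (Ioo 0 T)),
      g' t + G t ≤ α t * g t + β t * (f t) ^ 2) :
    ∀ t ∈ Icc (0:ℝ) T,
      g t + ∫ s in (0:ℝ)..t, G s ≤
        g 0 * Real.exp (∫ s in (0:ℝ)..t, (α s + A ^ 2 * s * β s)) :=
  gronwall_type_g_general T A f g G α β f' g' hf_nonneg hg_nonneg hG_nonneg hα_nonneg hβ_nonneg
    hf'_int hg'_int hG_int hα_int hβ_int hf_ftc hg_ftc hf0 h1 h2
end

section
/- Under the hypotheses of the Gronwall-type lemma (f'(t) ≤ A√(G(t)), g'(t) + G(t) ≤ α(t)g(t) + β(t)f(t)², f(0) = 0, α ∈ L¹, tβ(t) ∈ L¹, all functions nonnegative, f and g absolutely continuous), if additionally g(0) = 0, then f ≡ 0, g ≡ 0, and G = 0 almost everywhere on (0,T). -/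
/-!
Put `E t = g t + ∫₀ᵗ G`. Integrating `f' ≤ A √G` and applying Cauchy–Schwarz gives
`f t ² ≤ A² t ∫₀ᵗ G ≤ A² t E t`, so the second inequality integrates to
`E t ≤ ∫₀ᵗ (α s + A² s β s) E s` with an integrable kernel. Since `E 0 = 0`, Gronwall's
inequality forces `E ≡ 0`, hence `g ≡ 0`, `∫₀ᵀ G = 0` and then `f ≡ 0`.
-/

open MeasureTheory Set Filter Topology

theorem integral_mono_ae_restrict_Ioo {φ ψ : ℝ → ℝ} {a b : ℝ} (hab : a ≤ b)
    (hφ : IntervalIntegrable φ volume a b) (hψ : IntervalIntegrable ψ volume a b)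
    (h : ∀ᵐ s ∂volume.restrict (Ioo a b), φ s ≤ ψ s) :
    ∫ s in a..b, φ s ≤ ∫ s in a..b, ψ s :=
  intervalIntegral.integral_mono_ae_restrict hab hφ hψ
    (by rwa [← Measure.restrict_congr_set Ioo_ae_eq_Icc])

theorem continuousOn_of_eq_add_integral {g g' : ℝ → ℝ} {a b : ℝ}
    (hg' : IntegrableOn g' (Icc a b)) (hg : ∀ t ∈ Icc a b, g t = g a + ∫ s in a..t, g' s) :
    ContinuousOn g (Icc a b) :=
  (continuousOn_const (c := g a) |>.add (intervalIntegral.continuousOn_primitive hg')).congr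
    fun t ht => by rw [hg t ht, intervalIntegral.integral_of_le ht.1]; rfl

section Gronwall

variable {h u : ℝ → ℝ}

theorem eventually_intervalIntegral_lt {a b ε : ℝ} (hab : a < b)
    (hh : IntegrableOn h (Icc a b)) (hε : 0 < ε) :
    ∀ᶠ d in 𝓝[>] a, ∫ s in a..d, h s < ε := by
  have hcont : ContinuousWithinAt (fun d => ∫ s in a..d, h s) (Icc a b) a := by
    rw [← uIcc_of_le hab.le] at hh ⊢
    exact intervalIntegral.continuousOn_primitive_interval hh a left_mem_uIcc
  have hlim := hcont.tendsto
  rw [intervalIntegral.integral_same, nhdsWithin_Icc_eq_nhdsGE hab] at hlim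
  exact nhdsWithin_mono _ Ioi_subset_Ici_self (hlim.eventually (gt_mem_nhds hε))

theorem eqOn_zero_of_le_integral_mul_of_integral_lt_one {a b : ℝ} (hab : a ≤ b)
    (hh : IntegrableOn h (Icc a b)) (hh0 : ∀ t ∈ Icc a b, 0 ≤ h t)
    (hu : ContinuousOn u (Icc a b)) (hu0 : ∀ t ∈ Icc a b, 0 ≤ u t)
    (hle : ∀ t ∈ Icc a b, u t ≤ ∫ s in a..t, h s * u s) (hsmall : ∫ s in a..b, h s < 1) :
    EqOn u 0 (Icc a b) := by
  obtain ⟨m, hm, hmax⟩ := isCompact_Icc.exists_isMaxOn (nonempty_Icc.2 hab) hu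
  have hhu : IntegrableOn (fun s => h s * u s) (Icc a b) := hh.mul_continuousOn hu isCompact_Icc
  have hbound : ∀ t ∈ Icc a b, u t ≤ (∫ s in a..b, h s) * u m := by
    intro t ht
    have hsub : uIcc a t ⊆ Icc a b := uIcc_subset_Icc (left_mem_Icc.2 hab) ht
    calc u t ≤ ∫ s in a..t, h s * u s := hle t ht
      _ ≤ ∫ s in a..t, h s * u m :=
          intervalIntegral.integral_mono_on ht.1 (hhu.mono_set hsub).intervalIntegrable
            ((hh.mono_set hsub).intervalIntegrable.mul_const _) fun s hs =>
            mul_le_mul_of_nonneg_left (hmax (Icc_subset_Icc_right ht.2 hs))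
              (hh0 s (Icc_subset_Icc_right ht.2 hs))
      _ = (∫ s in a..t, h s) * u m := intervalIntegral.integral_mul_const _ _
      _ ≤ (∫ s in a..b, h s) * u m := by
          gcongr
          · exact hu0 m hm
          · exact intervalIntegral.integral_mono_interval le_rfl ht.1 ht.2
              (ae_restrict_of_forall_mem measurableSet_Ioc fun s hs => hh0 s
                (Ioc_subset_Icc_self hs))
              ((intervalIntegrable_iff_integrableOn_Icc_of_le hab).2 hh)
  have hm0 : u m ≤ 0 := by nlinarith [hbound m hm, hu0 m hm]
  exact fun t ht => le_antisymm ((hmax ht).trans hm0) (hu0 t ht)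

theorem eqOn_zero_of_le_integral_mul {a b : ℝ}
    (hh : IntegrableOn h (Icc a b)) (hh0 : ∀ t ∈ Icc a b, 0 ≤ h t)
    (hu : ContinuousOn u (Icc a b)) (hu0 : ∀ t ∈ Icc a b, 0 ≤ u t)
    (hle : ∀ t ∈ Icc a b, u t ≤ ∫ s in a..t, h s * u s) : EqOn u 0 (Icc a b) := by
  rcases lt_or_ge b a with hba | hab
  · simp [Icc_eq_empty_of_lt hba]
  have hhu : IntegrableOn (fun s => h s * u s) (Icc a b) := hh.mul_continuousOn hu isCompact_Icc
  have hclosed : IsClosed ({t | u t = 0} ∩ Icc a b) := by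
    rw [inter_comm]
    exact hu.preimage_isClosed_of_isClosed isClosed_Icc isClosed_singleton
  have ha : u a = 0 :=
    le_antisymm (by simpa using hle a (left_mem_Icc.2 hab)) (hu0 a (left_mem_Icc.2 hab))
  refine hclosed.Icc_subset_of_forall_mem_nhdsGT_of_Icc_subset ha fun t ht hzero => ?_
  have htb : Icc t b ⊆ Icc a b := Icc_subset_Icc_left ht.1
  obtain ⟨d, hsmall, htd, hdb⟩ := ((eventually_intervalIntegral_lt ht.2 (hh.mono_set htb)
    one_pos).and (Ioc_mem_nhdsGT ht.2)).exists
  have hsub : Icc t d ⊆ Icc a b := (Icc_subset_Icc_right hdb).trans htb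
  -- Since `u` vanishes on `[a, t]`, the integral inequality restarts at `t`.
  have hle' : ∀ s ∈ Icc t d, u s ≤ ∫ r in t..s, h r * u r := by
    intro s hs
    have hat : uIcc a t ⊆ Icc a b := uIcc_subset_Icc (left_mem_Icc.2 hab) ⟨ht.1, ht.2.le⟩
    have hts : uIcc t s ⊆ Icc a b := uIcc_subset_Icc ⟨ht.1, ht.2.le⟩ (hsub hs)
    have hzero' : ∫ r in a..t, h r * u r = 0 := by
      rw [intervalIntegral.integral_congr (g := fun _ => 0) fun r hr => by
        simp [show u r = 0 from hzero (by rwa [uIcc_of_le ht.1] at hr)]]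
      simp
    rw [← zero_add (∫ r in t..s, h r * u r), ← hzero',
      intervalIntegral.integral_add_adjacent_intervals (hhu.mono_set hat).intervalIntegrable
        (hhu.mono_set hts).intervalIntegrable]
    exact hle s (hsub hs)
  have hzero_td := eqOn_zero_of_le_integral_mul_of_integral_lt_one htd.le
    (hh.mono_set hsub) (fun s hs => hh0 s (hsub hs)) (hu.mono hsub)
    (fun s hs => hu0 s (hsub hs)) hle' hsmall
  exact mem_of_superset (Icc_mem_nhdsGT htd) hzero_td

end Gronwall

theorem eqOn_zero_of_eq_integral_of_ae_le_mul {E v k : ℝ → ℝ} {a b : ℝ}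
    (hv : IntegrableOn v (Icc a b)) (hk : IntegrableOn k (Icc a b))
    (hk0 : ∀ t ∈ Icc a b, 0 ≤ k t) (hE : ContinuousOn E (Icc a b))
    (hE0 : ∀ t ∈ Icc a b, 0 ≤ E t) (hEv : ∀ t ∈ Icc a b, E t = ∫ s in a..t, v s)
    (hvE : ∀ᵐ s ∂volume.restrict (Ioo a b), v s ≤ k s * E s) : EqOn E 0 (Icc a b) := by
  have hkE : IntegrableOn (fun s => k s * E s) (Icc a b) := hk.mul_continuousOn hE isCompact_Icc
  refine eqOn_zero_of_le_integral_mul hk hk0 hE hE0 fun t ht => ?_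
  have hsub : uIcc a t ⊆ Icc a b := uIcc_subset_Icc (left_mem_Icc.2 (ht.1.trans ht.2)) ht
  rw [hEv t ht]
  exact integral_mono_ae_restrict_Ioo ht.1 (hv.mono_set hsub).intervalIntegrable
    (hkE.mono_set hsub).intervalIntegrable
    (ae_restrict_of_ae_restrict_of_subset (Ioo_subset_Ioo_right ht.2) hvE)

theorem memLp_two_sqrt_of_integrable {α : Type*} [MeasurableSpace α] {μ : Measure α}
    {G : α → ℝ} (hG : Integrable G μ) (hG0 : 0 ≤ᵐ[μ] G) :
    MemLp (fun x => √(G x)) 2 μ := by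
  refine (memLp_two_iff_integrable_sq
    (Real.continuous_sqrt.comp_aestronglyMeasurable hG.aestronglyMeasurable)).2 ?_
  refine hG.congr ?_
  filter_upwards [hG0] with x hx
  simp [Real.sq_sqrt hx]

theorem integral_sqrt_le_sqrt_mul_integral {α : Type*} [MeasurableSpace α] {μ : Measure α}
    [IsFiniteMeasure μ] {G : α → ℝ} (hG : Integrable G μ) (hG0 : 0 ≤ᵐ[μ] G) :
    ∫ x, √(G x) ∂μ ≤ √(μ.real univ * ∫ x, G x ∂μ) := by
  have h := integral_mul_le_Lp_mul_Lq_of_nonneg Real.HolderConjugate.two_two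
    (f := fun _ => (1:ℝ)) (g := fun x => √(G x)) (μ := μ) (ae_of_all _ fun _ => zero_le_one)
    (ae_of_all _ fun _ => Real.sqrt_nonneg _) (memLp_const 1)
    (by simpa using memLp_two_sqrt_of_integrable hG hG0)
  have hsq : ∫ x, √(G x) ^ (2:ℝ) ∂μ = ∫ x, G x ∂μ := by
    refine integral_congr_ae ?_
    filter_upwards [hG0] with x hx
    simp [Real.sq_sqrt hx]
  rw [hsq] at h
  rw [Real.sqrt_mul' _ (integral_nonneg_of_ae hG0)]
  simpa [Real.sqrt_eq_rpow] using h

theorem sq_integral_le_of_le_mul_sqrt {φ G : ℝ → ℝ} {A a b : ℝ} (hab : a ≤ b)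
    (hφ : IntegrableOn φ (Icc a b)) (hG : IntegrableOn G (Icc a b))
    (hG0 : ∀ s ∈ Icc a b, 0 ≤ G s) (hφG : ∀ᵐ s ∂volume.restrict (Ioo a b), φ s ≤ A * √(G s))
    (hφ0 : 0 ≤ ∫ s in a..b, φ s) :
    (∫ s in a..b, φ s) ^ 2 ≤ A ^ 2 * ((b - a) * ∫ s in a..b, G s) := by
  have hG0' : 0 ≤ᵐ[volume.restrict (Ioc a b)] G :=
    ae_restrict_of_forall_mem measurableSet_Ioc fun s hs => hG0 s (Ioc_subset_Icc_self hs)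
  have hGi : IntegrableOn G (Ioc a b) := hG.mono_set Ioc_subset_Icc_self
  have hsqrt : IntervalIntegrable (fun s => √(G s)) volume a b :=
    (intervalIntegrable_iff_integrableOn_Ioc_of_le hab).2
      ((memLp_two_sqrt_of_integrable hGi hG0').integrable one_le_two)
  have hmono : ∫ s in a..b, φ s ≤ A * ∫ s in a..b, √(G s) := by
    rw [← intervalIntegral.integral_const_mul]
    exact integral_mono_ae_restrict_Ioo hab
      ((intervalIntegrable_iff_integrableOn_Icc_of_le hab).2 hφ) (hsqrt.const_mul A) hφG
  have hCS : ∫ s in a..b, √(G s) ≤ √((b - a) * ∫ s in a..b, G s) := by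
    simpa [intervalIntegral.integral_of_le hab, Real.volume_real_Ioc_of_le hab] using
      integral_sqrt_le_sqrt_mul_integral hGi hG0'
  have hsqrt0 : 0 ≤ ∫ s in a..b, √(G s) :=
    intervalIntegral.integral_nonneg hab fun _ _ => Real.sqrt_nonneg _
  have hGint0 : 0 ≤ (b - a) * ∫ s in a..b, G s :=
    mul_nonneg (sub_nonneg.2 hab) (intervalIntegral.integral_nonneg hab hG0)
  calc (∫ s in a..b, φ s) ^ 2 ≤ (A * ∫ s in a..b, √(G s)) ^ 2 := by gcongr
    _ = A ^ 2 * (∫ s in a..b, √(G s)) ^ 2 := mul_pow _ _ _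
    _ ≤ A ^ 2 * √((b - a) * ∫ s in a..b, G s) ^ 2 := by gcongr
    _ = A ^ 2 * ((b - a) * ∫ s in a..b, G s) := by rw [Real.sq_sqrt hGint0]

theorem sq_le_mul_integral_of_le_mul_sqrt {f f' G : ℝ → ℝ} {A a b : ℝ}
    (hf_nonneg : ∀ t ∈ Icc a b, 0 ≤ f t) (hf'_int : IntegrableOn f' (Icc a b))
    (hG_int : IntegrableOn G (Icc a b)) (hG_nonneg : ∀ t ∈ Icc a b, 0 ≤ G t)
    (hf_ftc : ∀ t ∈ Icc a b, f t = f a + ∫ s in a..t, f' s) (hfa : f a = 0)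
    (hf'G : ∀ᵐ s ∂(volume.restrict (Ioo a b)), f' s ≤ A * √(G s)) :
    ∀ t ∈ Icc a b, f t ^ 2 ≤ A ^ 2 * ((t - a) * ∫ s in a..t, G s) := by
  intro t ht
  have hsub : Icc a t ⊆ Icc a b := Icc_subset_Icc_right ht.2
  have hft : f t = ∫ s in a..t, f' s := by rw [hf_ftc t ht, hfa, zero_add]
  rw [hft]
  exact sq_integral_le_of_le_mul_sqrt ht.1 (hf'_int.mono_set hsub) (hG_int.mono_set hsub)
    (fun s hs => hG_nonneg s (hsub hs))
    (ae_restrict_of_ae_restrict_of_subset (Ioo_subset_Ioo_right ht.2) hf'G)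
    (hft ▸ hf_nonneg t ht)

theorem add_integral_eqOn_zero_of_ae_le {g g' G α β F : ℝ → ℝ} {C T : ℝ} (hC : 0 ≤ C)
    (hg_nonneg : ∀ t ∈ Icc (0:ℝ) T, 0 ≤ g t) (hG_nonneg : ∀ t ∈ Icc (0:ℝ) T, 0 ≤ G t)
    (hα_nonneg : ∀ t ∈ Icc (0:ℝ) T, 0 ≤ α t) (hβ_nonneg : ∀ t ∈ Icc (0:ℝ) T, 0 ≤ β t)
    (hg'_int : IntegrableOn g' (Icc 0 T)) (hG_int : IntegrableOn G (Icc 0 T))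
    (hα_int : IntegrableOn α (Icc 0 T)) (hβ_int : IntegrableOn (fun t => t * β t) (Icc 0 T))
    (hg_ftc : ∀ t ∈ Icc (0:ℝ) T, g t = g 0 + ∫ s in (0:ℝ)..t, g' s) (hg0 : g 0 = 0)
    (hF : ∀ t ∈ Icc (0:ℝ) T, F t ≤ C * (t * ∫ s in (0:ℝ)..t, G s))
    (hgG : ∀ᵐ t ∂(volume.restrict (Ioo 0 T)), g' t + G t ≤ α t * g t + β t * F t) :
    EqOn (fun t => g t + ∫ s in (0:ℝ)..t, G s) 0 (Icc 0 T) := by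
  set IG : ℝ → ℝ := fun t => ∫ s in (0:ℝ)..t, G s
  have hIG0 : ∀ t ∈ Icc 0 T, 0 ≤ IG t := fun t ht =>
    intervalIntegral.integral_nonneg ht.1 fun s hs => hG_nonneg s ⟨hs.1, hs.2.trans ht.2⟩
  refine eqOn_zero_of_eq_integral_of_ae_le_mul (v := fun s => g' s + G s) (hg'_int.add hG_int)
    (hα_int.add (hβ_int.const_mul C)) (fun t ht => ?_)
    ((continuousOn_of_eq_add_integral hg'_int hg_ftc).add
      (continuousOn_of_eq_add_integral hG_int fun t _ => by simp))
    (fun t ht => add_nonneg (hg_nonneg t ht) (hIG0 t ht)) (fun t ht => ?_) ?_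
  · exact add_nonneg (hα_nonneg t ht) (mul_nonneg hC (mul_nonneg ht.1 (hβ_nonneg t ht)))
  · have hsub : uIcc 0 t ⊆ Icc 0 T := uIcc_subset_Icc (left_mem_Icc.2 (ht.1.trans ht.2)) ht
    rw [intervalIntegral.integral_add (hg'_int.mono_set hsub).intervalIntegrable
      (hG_int.mono_set hsub).intervalIntegrable, hg_ftc t ht, hg0, zero_add]
  · filter_upwards [hgG, ae_restrict_mem measurableSet_Ioo] with s hs hsT
    replace hsT : s ∈ Icc 0 T := Ioo_subset_Icc_self hsT
    have hgE : g s ≤ g s + IG s := le_add_of_nonneg_right (hIG0 s hsT)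
    have hFE : F s ≤ C * (s * (g s + IG s)) :=
      (hF s hsT).trans (mul_le_mul_of_nonneg_left (mul_le_mul_of_nonneg_left
        (le_add_of_nonneg_left (hg_nonneg s hsT)) hsT.1) hC)
    calc g' s + G s ≤ α s * g s + β s * F s := hs
      _ ≤ α s * (g s + IG s) + β s * (C * (s * (g s + IG s))) := by
        gcongr
        exacts [hα_nonneg s hsT, hβ_nonneg s hsT]
      _ = (α s + C * (s * β s)) * (g s + IG s) := by ring

theorem gronwall_type_zero_general (T A : ℝ) (hT : 0 < T)
    (f g G α β f' g' : ℝ → ℝ)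
    (hf_nonneg : ∀ t ∈ Icc (0:ℝ) T, 0 ≤ f t)
    (hg_nonneg : ∀ t ∈ Icc (0:ℝ) T, 0 ≤ g t)
    (hG_nonneg : ∀ t ∈ Icc (0:ℝ) T, 0 ≤ G t)
    (hα_nonneg : ∀ t ∈ Icc (0:ℝ) T, 0 ≤ α t)
    (hβ_nonneg : ∀ t ∈ Icc (0:ℝ) T, 0 ≤ β t)
    (hf'_int : IntegrableOn f' (Icc 0 T))
    (hg'_int : IntegrableOn g' (Icc 0 T))
    (hG_int : IntegrableOn G (Icc 0 T))
    (hα_int : IntegrableOn α (Icc 0 T))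
    (hβ_int : IntegrableOn (fun t => t * β t) (Icc 0 T))
    (hf_ftc : ∀ t ∈ Icc (0:ℝ) T, f t = f 0 + ∫ s in (0:ℝ)..t, f' s)
    (hg_ftc : ∀ t ∈ Icc (0:ℝ) T, g t = g 0 + ∫ s in (0:ℝ)..t, g' s)
    (hf0 : f 0 = 0)
    (h1 : ∀ᵐ t ∂(volume.restrict (Ioo 0 T)), f' t ≤ A * Real.sqrt (G t))
    (h2 : ∀ᵐ t ∂(volume.restrict (Ioo 0 T)),
      g' t + G t ≤ α t * g t + β t * (f t) ^ 2)
    (hg0 : g 0 = 0) :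
    (∀ t ∈ Icc (0:ℝ) T, f t = 0 ∧ g t = 0) ∧
      (∀ᵐ t ∂(volume.restrict (Ioo 0 T)), G t = 0) := by
  set IG : ℝ → ℝ := fun t => ∫ s in (0:ℝ)..t, G s
  have hIG0 : ∀ t ∈ Icc 0 T, 0 ≤ IG t := fun t ht =>
    intervalIntegral.integral_nonneg ht.1 fun s hs => hG_nonneg s ⟨hs.1, hs.2.trans ht.2⟩
  have hf_sq : ∀ t ∈ Icc 0 T, f t ^ 2 ≤ A ^ 2 * (t * IG t) := by
    simpa using
      sq_le_mul_integral_of_le_mul_sqrt hf_nonneg hf'_int hG_int hG_nonneg hf_ftc hf0 h1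
  have hE : ∀ t ∈ Icc 0 T, g t + IG t = 0 := fun t ht =>
    add_integral_eqOn_zero_of_ae_le (sq_nonneg A) hg_nonneg hG_nonneg hα_nonneg hβ_nonneg
      hg'_int hG_int hα_int hβ_int hg_ftc hg0 hf_sq h2 ht
  have hg_zero : ∀ t ∈ Icc 0 T, g t = 0 := fun t ht => by
    linarith [hE t ht, hg_nonneg t ht, hIG0 t ht]
  have hIG_zero : ∀ t ∈ Icc 0 T, IG t = 0 := fun t ht => by
    linarith [hE t ht, hg_nonneg t ht, hIG0 t ht]
  refine ⟨fun t ht => ⟨?_, hg_zero t ht⟩, ?_⟩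
  · exact pow_eq_zero_iff two_ne_zero |>.1 <|
      le_antisymm (by simpa [hIG_zero t ht] using hf_sq t ht) (sq_nonneg _)
  · have hG_ae := (intervalIntegral.integral_eq_zero_iff_of_le_of_nonneg_ae hT.le
      (ae_restrict_of_forall_mem measurableSet_Ioc fun s hs =>
        hG_nonneg s (Ioc_subset_Icc_self hs))
      ((intervalIntegrable_iff_integrableOn_Icc_of_le hT.le).2 hG_int)).1
      (hIG_zero T (right_mem_Icc.2 hT.le))
    exact ae_restrict_of_ae_restrict_of_subset Ioo_subset_Ioc_self hG_ae

/-- Lemma 2.5 (Gronwall-type inequality), vanishing consequence (uniqueness). -/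
theorem gronwall_type_zero (T A : ℝ) (hT : 0 < T) (hA : 0 ≤ A)
    (f g G α β f' g' : ℝ → ℝ)
    (hf_nonneg : ∀ t ∈ Icc (0:ℝ) T, 0 ≤ f t)
    (hg_nonneg : ∀ t ∈ Icc (0:ℝ) T, 0 ≤ g t)
    (hG_nonneg : ∀ t ∈ Icc (0:ℝ) T, 0 ≤ G t)
    (hα_nonneg : ∀ t ∈ Icc (0:ℝ) T, 0 ≤ α t)
    (hβ_nonneg : ∀ t ∈ Icc (0:ℝ) T, 0 ≤ β t)
    (hf'_int : IntegrableOn f' (Icc 0 T))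
    (hg'_int : IntegrableOn g' (Icc 0 T))
    (hG_int : IntegrableOn G (Icc 0 T))
    (hα_int : IntegrableOn α (Icc 0 T))
    (hβ_int : IntegrableOn (fun t => t * β t) (Icc 0 T))
    (hf_ftc : ∀ t ∈ Icc (0:ℝ) T, f t = f 0 + ∫ s in (0:ℝ)..t, f' s)
    (hg_ftc : ∀ t ∈ Icc (0:ℝ) T, g t = g 0 + ∫ s in (0:ℝ)..t, g' s)
    (hf0 : f 0 = 0)
    (h1 : ∀ᵐ t ∂(volume.restrict (Ioo 0 T)), f' t ≤ A * Real.sqrt (G t))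
    (h2 : ∀ᵐ t ∂(volume.restrict (Ioo 0 T)),
      g' t + G t ≤ α t * g t + β t * (f t) ^ 2)
    (hg0 : g 0 = 0) :
    (∀ t ∈ Icc (0:ℝ) T, f t = 0 ∧ g t = 0) ∧
      (∀ᵐ t ∂(volume.restrict (Ioo 0 T)), G t = 0) :=
  gronwall_type_zero_general T A hT f g G α β f' g' hf_nonneg hg_nonneg hG_nonneg hα_nonneg
    hβ_nonneg hf'_int hg'_int hG_int hα_int hβ_int hf_ftc hg_ftc hf0 h1 h2 hg0
end
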